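/- Suppose (Λ_n) satisfies Condition (D^Λ) and fix 1 ≤ j ≤ q. Then 𝓛_j is a subgroup (lattice) of ℤ^k. Moreover, with D_{l_1},…,D_{l_{b_j}} the distinct sets of the form ((D_j)_{−z})⁺ for z ∈ D_j \ 𝓖_j, and z_{l_i} ∈ D_j chosen with D_{l_i} = ((D_j)_{−z_{l_i}})⁺, one has the partition D_j = 𝓛_j⁺ ∪ ⋃_{i=1}^{b_j} ((𝓛_{l_i})_{z_{l_i}})⁺ (the sets on the right being pairwise disjoint). Furthermore 𝓛_{l_i} ⊇ 𝓛_j and the lattices 𝓛_{l_i} and 𝓛_j have the same rank for every i = 1,…,b_j. Finally, D_j is bounded if and only if 𝓛_j = {0}, and in that case D_j = {z_{l_1},…,z_{l_{b_j}}}. -/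

import Mathlib

open scoped Classical Pointwise
open Filter Set

namespace Paper

/-- The index space `ℤ^k`. -/
abbrev V (k : ℕ) := Fin k → ℤ

variable {k : ℕ}

/-- Translate of a set: `(A)_t = {a + t : a ∈ A}`. -/
def tr (A : Set (V k)) (t : V k) : Set (V k) := (fun a => a + t) '' A

/-- Positive part of a set with respect to the order `prec`: `A⁺ = {a ∈ A : 0 ≺ a}`. -/
def posPart (prec : V k → V k → Prop) (A : Set (V k)) : Set (V k) := {a ∈ A | prec 0 a}

/-- The hypercube `K_c = ([-c,c] ∩ ℤ)^k`. -/
def Kc (k c : ℕ) : Set (V k) := {t : V k | ∀ i, |t i| ≤ (c : ℤ)}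

/-- `Λ^{(t,c)} = ((Λ)_{-t} ∩ K_c)⁺`. -/
def window (prec : V k → V k → Prop) (Λ : Set (V k)) (t : V k) (c : ℕ) : Set (V k) :=
  posPart prec (tr Λ (-t) ∩ Kc k c)

/-- A translation-invariant total (strict) order on `ℤ^k`. -/
structure IsTransOrder (prec : V k → V k → Prop) : Prop where
  trans : ∀ {a b c : V k}, prec a b → prec b c → prec a c
  irrefl : ∀ a : V k, ¬ prec a a
  total : ∀ a b : V k, a ≠ b → prec a b ∨ prec b a
  invariant : ∀ a b i : V k, prec a b → prec (a + i) (b + i)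

/-- Condition `(D^Λ)`: the index sets `Λ_n`, the asymptotic sets `D_1, …, D_q`
(`q ∈ ℕ ∪ {∞}`, indexed by `i : ℕ` with `(i : ℕ∞) < q`), and the weights. -/
structure CondD (k : ℕ) where
  prec : V k → V k → Prop
  ord : IsTransOrder prec
  Lam : ℕ → Finset (V k)
  card_top : Tendsto (fun n => (Lam n).card) atTop atTop
  q : ℕ∞
  D : ℕ → Set (V k)
  D_subset : ∀ i : ℕ, (i : ℕ∞) < q → D i ⊆ {t : V k | prec 0 t}
  D_ne : ∀ i j : ℕ, (i : ℕ∞) < q → (j : ℕ∞) < q → i ≠ j → D i ≠ D j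
  lamP : ℕ → ℕ → ℝ
  lam : ℕ → ℝ
  tendsto_lamP : ∀ i p : ℕ, (i : ℕ∞) < q →
    Tendsto (fun n =>
        (((Lam n).filter fun t => window prec (Lam n : Set (V k)) t p = D i ∩ Kc k p).card : ℝ) /
          ((Lam n).card : ℝ))
      atTop (nhds (lamP i p))
  tendsto_lam : ∀ i : ℕ, (i : ℕ∞) < q → Tendsto (fun p => lamP i p) atTop (nhds (lam i))
  lam_pos : ∀ i : ℕ, (i : ℕ∞) < q → 0 < lam i
  lam_sum : ∑' i : {i : ℕ // (i : ℕ∞) < q}, lam i.1 = 1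

/-- `((A)_{-z})⁺`, the shifted positive part of `A`. -/
def shiftPos (prec : V k → V k → Prop) (A : Set (V k)) (z : V k) : Set (V k) :=
  posPart prec (tr A (-z))

/-- `𝓖(A) = {z ∈ A ∪ {0} : ((A)_{-z})⁺ = A}`. -/
def Gset (prec : V k → V k → Prop) (A : Set (V k)) : Set (V k) :=
  {z ∈ insert (0 : V k) A | shiftPos prec A z = A}

/-- `𝓛(A) = 𝓖(A) ∪ (-𝓖(A))`. -/
def Lset (prec : V k → V k → Prop) (A : Set (V k)) : Set (V k) :=
  Gset prec A ∪ (-(Gset prec A))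

/-- The rank (as a free abelian group) of the subgroup of `ℤ^k` generated by `S`. -/
noncomputable def latticeRank (S : Set (V k)) : ℕ :=
  Module.finrank ℤ ↥(AddSubgroup.toIntSubmodule (AddSubgroup.closure S))

end Paper

/-!
For `A ⊆ {t | 0 ≺ t}` and a period `g ∈ 𝓖(A)` one has `a ∈ A ↔ a + g ∈ A` for every `a ≻ 0`;
together with `((((A)_{-z})⁺)_{-x})⁺ = ((A)_{-(z+x)})⁺` for `x ⪰ 0` this makes
`𝓛(A) = 𝓖(A) - 𝓖(A)` a group.

The density condition is used once: if `M λ_j > 1`, any `M` points of `D_j` contain two whose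
difference lies in `𝓛_j`, for otherwise the `M` translates of the set of positions `t ∈ Λ_n` whose
window looks like `D_j` would be disjoint subsets of `Λ_n`. Applied to a ray `z + ℕ g ⊆ D_j`, this
gives every period `g` of a shifted set `((D_j)_{-z})⁺` a nonzero multiple in `𝓖_j`. So the lattice
of the shifted set is torsion modulo `𝓛_j` (equal ranks), and the points of `D_j` with the
same shifted set as `z` are exactly the positive points of the coset `z + 𝓛(((D_j)_{-z})⁺)`,
which is the partition. A nonzero period makes `D_j` unbounded, while `𝓛_j = {0}` makes `D_j`
finite by the same pigeonhole statement.
-/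

theorem Submodule.finrank_eq_of_le_of_exists_smul_mem {R M : Type*} [CommRing R] [IsDomain R]
    [AddCommGroup M] [Module R M] [IsNoetherian R M]
    {N N' : Submodule R M} (hle : N ≤ N') (htors : ∀ x ∈ N', ∃ r : R, r ≠ 0 ∧ r • x ∈ N) :
    Module.finrank R N' = Module.finrank R N := by
  refine le_antisymm (not_lt.mp fun hlt => ?_) (Submodule.finrank_mono hle)
  have hN : Module.finrank R (N.comap N'.subtype) = Module.finrank R N :=
    (Submodule.comapSubtypeEquivOfLe hle).finrank_eq
  obtain ⟨x, hx⟩ := (N.comap N'.subtype).exists_of_finrank_lt (hN ▸ hlt)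
  obtain ⟨r, hr, hrx⟩ := htors x x.2
  exact hx r hr hrx

namespace Paper

variable {k : ℕ} {prec : V k → V k → Prop}

namespace IsTransOrder

lemma pos_add (h : IsTransOrder prec) {a b : V k} (ha : prec 0 a) (hb : prec 0 b) :
    prec 0 (a + b) :=
  h.trans hb (by simpa [add_comm] using h.invariant 0 a b ha)

lemma ne_zero_of_pos (h : IsTransOrder prec) {a : V k} (ha : prec 0 a) : a ≠ 0 :=
  fun h0 => h.irrefl 0 (h0 ▸ ha)

lemma not_pos_neg (h : IsTransOrder prec) {a : V k} (ha : prec 0 a) : ¬ prec 0 (-a) :=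
  fun hna => h.irrefl 0 (h.trans hna (by simpa using h.invariant 0 a (-a) ha))

lemma trichotomy (h : IsTransOrder prec) (a : V k) : a = 0 ∨ prec 0 a ∨ prec 0 (-a) := by
  rcases eq_or_ne a 0 with rfl | ha
  · exact Or.inl rfl
  rcases h.total 0 a ha.symm with h0 | h0
  · exact Or.inr (Or.inl h0)
  · exact Or.inr (Or.inr (by simpa using h.invariant a 0 (-a) h0))

lemma pos_nsmul (h : IsTransOrder prec) {g : V k} (hg : prec 0 g) {n : ℕ} (hn : n ≠ 0) :
    prec 0 (n • g) := by
  induction n with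
  | zero => exact absurd rfl hn
  | succ n ih =>
    rcases eq_or_ne n 0 with rfl | hn'
    · simpa using hg
    · rw [succ_nsmul]
      exact h.pos_add (ih hn') hg

end IsTransOrder

section Membership

variable {A : Set (V k)} {x z : V k}

lemma mem_tr {t : V k} : x ∈ tr A t ↔ x - t ∈ A :=
  ⟨by rintro ⟨a, ha, rfl⟩; simpa using ha, fun hx => ⟨x - t, hx, sub_add_cancel x t⟩⟩

lemma mem_posPart : x ∈ posPart prec A ↔ x ∈ A ∧ prec 0 x := Iff.rfl

lemma mem_shiftPos : x ∈ shiftPos prec A z ↔ x + z ∈ A ∧ prec 0 x := by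
  simp [shiftPos, mem_posPart, mem_tr]

lemma mem_Lset : x ∈ Lset prec A ↔ x ∈ Gset prec A ∨ -x ∈ Gset prec A := Iff.rfl

lemma mem_window {Λ : Set (V k)} {t : V k} {c : ℕ} :
    x ∈ window prec Λ t c ↔ (x + t ∈ Λ ∧ x ∈ Kc k c) ∧ prec 0 x := by
  simp [window, mem_posPart, mem_tr]

lemma pos_of_mem_shiftPos (hx : x ∈ shiftPos prec A z) : prec 0 x :=
  (mem_shiftPos.mp hx).2

end Membership

section Periods

variable {A : Set (V k)} {x y z g : V k}

lemma shiftPos_zero (hA : ∀ a ∈ A, prec 0 a) : shiftPos prec A 0 = A := by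
  ext x
  simpa [mem_shiftPos] using hA x

lemma shiftPos_shiftPos (h : IsTransOrder prec) (hx : x = 0 ∨ prec 0 x) :
    shiftPos prec (shiftPos prec A z) x = shiftPos prec A (z + x) := by
  ext s
  have hsx : prec 0 s → prec 0 (s + x) := fun hs =>
    hx.elim (fun hx0 => by simpa [hx0] using hs) (h.pos_add hs)
  simp only [mem_shiftPos, add_assoc, add_comm x z]
  tauto

lemma zero_mem_Gset (hA : ∀ a ∈ A, prec 0 a) : (0 : V k) ∈ Gset prec A :=
  ⟨Or.inl rfl, shiftPos_zero hA⟩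

lemma eq_zero_or_pos_of_mem_Gset (hA : ∀ a ∈ A, prec 0 a) (hx : x ∈ Gset prec A) :
    x = 0 ∨ prec 0 x :=
  hx.1.imp_right (hA x)

lemma mem_of_mem_Gset (hx : x ∈ Gset prec A) (hx0 : x ≠ 0) : x ∈ A :=
  hx.1.resolve_left hx0

lemma mem_iff_of_mem_Gset (hg : g ∈ Gset prec A) : x ∈ A ↔ x + g ∈ A ∧ prec 0 x := by
  rw [← mem_shiftPos, hg.2]

lemma add_mem_of_mem_Gset (hg : g ∈ Gset prec A) (hx : x ∈ A) : x + g ∈ A :=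
  ((mem_iff_of_mem_Gset hg).mp hx).1

lemma sub_mem_of_mem_Gset (hg : g ∈ Gset prec A) (hx : x ∈ A) (hpos : prec 0 (x - g)) :
    x - g ∈ A :=
  (mem_iff_of_mem_Gset hg).mpr ⟨by rwa [sub_add_cancel], hpos⟩

lemma add_mem_Gset (h : IsTransOrder prec) (hA : ∀ a ∈ A, prec 0 a) (hx : x ∈ Gset prec A)
    (hy : y ∈ Gset prec A) : x + y ∈ Gset prec A := by
  refine ⟨?_, by rw [← shiftPos_shiftPos h (eq_zero_or_pos_of_mem_Gset hA hy), hx.2, hy.2]⟩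
  rcases hx.1 with rfl | hxA
  · simpa using hy.1
  · exact Or.inr (add_mem_of_mem_Gset hy hxA)

lemma nsmul_mem_Gset (h : IsTransOrder prec) (hA : ∀ a ∈ A, prec 0 a) (hx : x ∈ Gset prec A)
    (n : ℕ) : n • x ∈ Gset prec A := by
  induction n with
  | zero => simpa using zero_mem_Gset hA
  | succ n ih =>
    rw [succ_nsmul]
    exact add_mem_Gset h hA ih hx

lemma sub_mem_Gset (h : IsTransOrder prec) (hA : ∀ a ∈ A, prec 0 a) (hx : x ∈ Gset prec A)
    (hy : y ∈ Gset prec A) (hpos : prec 0 (x - y)) : x - y ∈ Gset prec A := by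
  have hx0 : x ≠ 0 := by
    rintro rfl
    rcases eq_zero_or_pos_of_mem_Gset hA hy with rfl | hy0
    · exact h.irrefl 0 (by simpa using hpos)
    · exact h.not_pos_neg hy0 (by simpa using hpos)
  refine ⟨Or.inr (sub_mem_of_mem_Gset hy (mem_of_mem_Gset hx hx0) hpos), ?_⟩
  calc shiftPos prec A (x - y) = shiftPos prec (shiftPos prec A y) (x - y) := by rw [hy.2]
    _ = shiftPos prec A (y + (x - y)) := shiftPos_shiftPos h (Or.inr hpos)
    _ = A := by rw [add_sub_cancel, hx.2]

lemma mem_Gset_of_mem_Lset (h : IsTransOrder prec) (hA : ∀ a ∈ A, prec 0 a)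
    (hx : x ∈ Lset prec A) (hpos : prec 0 x) : x ∈ Gset prec A := by
  refine hx.resolve_right fun hnx => ?_
  rcases eq_zero_or_pos_of_mem_Gset hA hnx with hx0 | hx0
  · exact h.irrefl 0 (by simpa [neg_eq_zero.mp hx0] using hpos)
  · exact h.not_pos_neg hpos hx0

lemma sub_mem_Lset (h : IsTransOrder prec) (hA : ∀ a ∈ A, prec 0 a) (hx : x ∈ Gset prec A)
    (hy : y ∈ Gset prec A) : x - y ∈ Lset prec A := by
  rcases h.trichotomy (x - y) with h0 | hpos | hneg
  · exact Or.inl (h0 ▸ zero_mem_Gset hA)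
  · exact Or.inl (sub_mem_Gset h hA hx hy hpos)
  · rw [neg_sub] at hneg
    exact Or.inr (by simpa using sub_mem_Gset h hA hy hx hneg)

lemma mem_Lset_iff_exists_sub (h : IsTransOrder prec) (hA : ∀ a ∈ A, prec 0 a) :
    x ∈ Lset prec A ↔ ∃ u ∈ Gset prec A, ∃ v ∈ Gset prec A, u - v = x := by
  refine ⟨fun hx => ?_, fun ⟨u, hu, v, hv, hx⟩ => hx ▸ sub_mem_Lset h hA hu hv⟩
  rcases hx with hx | hx
  · exact ⟨x, hx, 0, zero_mem_Gset hA, sub_zero x⟩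
  · exact ⟨0, zero_mem_Gset hA, -x, hx, by simp⟩

def lsetAddSubgroup (h : IsTransOrder prec) (A : Set (V k)) (hA : ∀ a ∈ A, prec 0 a) :
    AddSubgroup (V k) where
  carrier := Lset prec A
  zero_mem' := Or.inl (zero_mem_Gset hA)
  add_mem' {a b} ha hb := by
    rw [mem_Lset_iff_exists_sub h hA] at ha hb ⊢
    obtain ⟨u, hu, v, hv, rfl⟩ := ha
    obtain ⟨u', hu', v', hv', rfl⟩ := hb
    exact ⟨u + u', add_mem_Gset h hA hu hu', v + v', add_mem_Gset h hA hv hv', by abel⟩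
  neg_mem' {x} hx := by
    rw [mem_Lset, neg_neg]
    exact hx.symm

lemma coe_lsetAddSubgroup (h : IsTransOrder prec) (hA : ∀ a ∈ A, prec 0 a) :
    (lsetAddSubgroup h A hA : Set (V k)) = Lset prec A :=
  rfl

lemma posPart_Lset (h : IsTransOrder prec) (hA : ∀ a ∈ A, prec 0 a) :
    posPart prec (Lset prec A) = {y ∈ A | shiftPos prec A y = A} := by
  ext y
  refine ⟨fun ⟨hy, hpos⟩ => ?_, fun ⟨hyA, hy⟩ => ⟨Or.inl ⟨Or.inr hyA, hy⟩, hA y hyA⟩⟩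
  have hyG := mem_Gset_of_mem_Lset h hA hy hpos
  exact ⟨mem_of_mem_Gset hyG (h.ne_zero_of_pos hpos), hyG.2⟩

lemma Lset_eq_zero_iff (hA : ∀ a ∈ A, prec 0 a) :
    Lset prec A = {0} ↔ ∀ g ∈ Gset prec A, g = 0 := by
  refine ⟨fun hL g hg => by simpa [hL] using (show g ∈ Lset prec A from Or.inl hg), fun hG => ?_⟩
  ext x
  refine ⟨fun hx => ?_, fun hx => hx ▸ Or.inl (zero_mem_Gset hA)⟩
  rcases hx with hx | hx
  · exact hG x hx
  · exact neg_eq_zero.mp (hG _ hx)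

end Periods

section Shifts

variable {A : Set (V k)} {z d g : V k}

lemma Gset_subset_Gset_shiftPos (h : IsTransOrder prec) (hA : ∀ a ∈ A, prec 0 a) (hz : z ∈ A) :
    Gset prec A ⊆ Gset prec (shiftPos prec A z) := by
  intro x hx
  have hx0 := eq_zero_or_pos_of_mem_Gset hA hx
  refine ⟨hx0.imp_right fun hpos => mem_shiftPos.mpr ⟨?_, hpos⟩, ?_⟩
  · rw [add_comm]
    exact add_mem_of_mem_Gset hx hz
  · rw [shiftPos_shiftPos h hx0, add_comm, ← shiftPos_shiftPos h (Or.inr (hA z hz)), hx.2]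

lemma Lset_subset_Lset_shiftPos (h : IsTransOrder prec) (hA : ∀ a ∈ A, prec 0 a) (hz : z ∈ A) :
    Lset prec A ⊆ Lset prec (shiftPos prec A z) :=
  Set.union_subset_union (Gset_subset_Gset_shiftPos h hA hz)
    (Set.neg_subset_neg.mpr (Gset_subset_Gset_shiftPos h hA hz))

lemma sub_mem_Gset_shiftPos_of_shiftPos_eq (h : IsTransOrder prec) (hd : d ∈ A)
    (heq : shiftPos prec A d = shiftPos prec A z) (hpos : prec 0 (d - z)) :
    d - z ∈ Gset prec (shiftPos prec A z) := by
  refine ⟨Or.inr (mem_shiftPos.mpr ⟨by rwa [sub_add_cancel], hpos⟩), ?_⟩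
  rw [shiftPos_shiftPos h (Or.inr hpos), add_sub_cancel, heq]

lemma sub_mem_Lset_shiftPos_of_shiftPos_eq (h : IsTransOrder prec) (hd : d ∈ A) (hz : z ∈ A)
    (heq : shiftPos prec A d = shiftPos prec A z) : d - z ∈ Lset prec (shiftPos prec A z) := by
  rcases h.trichotomy (d - z) with h0 | hpos | hneg
  · exact Or.inl (h0 ▸ zero_mem_Gset fun _ => pos_of_mem_shiftPos)
  · exact Or.inl (sub_mem_Gset_shiftPos_of_shiftPos_eq h hd heq hpos)
  · rw [neg_sub] at hneg
    refine Or.inr ?_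
    rw [Set.mem_neg, neg_sub, ← heq]
    exact sub_mem_Gset_shiftPos_of_shiftPos_eq h hz heq.symm hneg

lemma shiftPos_add_of_mem_Gset_shiftPos (h : IsTransOrder prec)
    (hg : g ∈ Gset prec (shiftPos prec A z)) : shiftPos prec A (z + g) = shiftPos prec A z := by
  rw [← shiftPos_shiftPos h (eq_zero_or_pos_of_mem_Gset (fun _ => pos_of_mem_shiftPos) hg), hg.2]

lemma add_nsmul_mem (h : IsTransOrder prec) (hz : z ∈ A) (hg : g ∈ Gset prec (shiftPos prec A z))
    (n : ℕ) : z + n • g ∈ A := by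
  have hng := nsmul_mem_Gset h (fun _ => pos_of_mem_shiftPos) hg n
  rcases eq_or_ne (n • g) 0 with h0 | h0
  · rwa [h0, add_zero]
  · rw [add_comm]
    exact (mem_shiftPos.mp (mem_of_mem_Gset hng h0)).1

end Shifts

section Cube

variable {u v : V k} {c c' : ℕ}

lemma Kc_mono (hcc : c ≤ c') : Kc k c ⊆ Kc k c' :=
  fun _ ht i => (ht i).trans (by exact_mod_cast hcc)

lemma add_mem_Kc (hu : u ∈ Kc k c) (hv : v ∈ Kc k c') : u + v ∈ Kc k (c + c') := fun i =>
  (abs_add_le (u i) (v i)).trans (by push_cast; exact add_le_add (hu i) (hv i))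

lemma sub_mem_Kc (hu : u ∈ Kc k c) (hv : v ∈ Kc k c') : u - v ∈ Kc k (c + c') := fun i =>
  (abs_sub (u i) (v i)).trans (by push_cast; exact add_le_add (hu i) (hv i))

lemma exists_subset_Kc_of_finite {A : Set (V k)} (hA : A.Finite) : ∃ c : ℕ, A ⊆ Kc k c := by
  refine ⟨hA.toFinset.sup fun a => Finset.univ.sup fun i => (a i).natAbs, fun a ha i => ?_⟩
  have hai : (a i).natAbs ≤ hA.toFinset.sup fun a => Finset.univ.sup fun i => (a i).natAbs :=
    (Finset.le_sup (f := fun i => (a i).natAbs) (Finset.mem_univ i)).trans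
      (Finset.le_sup (f := fun a => Finset.univ.sup fun i => (a i).natAbs)
        (hA.mem_toFinset.mpr ha))
  rw [Int.abs_eq_natAbs]
  exact_mod_cast hai

lemma succ_nsmul_notMem_Kc {g : V k} (hg : g ≠ 0) (c : ℕ) : (c + 1) • g ∉ Kc k c := by
  obtain ⟨i, hi⟩ := Function.ne_iff.mp hg
  intro hc
  have hgi : (1 : ℤ) ≤ |g i| := Int.one_le_abs hi
  have hci := hc i
  rw [Pi.smul_apply, nsmul_eq_mul, abs_mul] at hci
  push_cast at hci
  rw [abs_of_nonneg (by positivity)] at hci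
  nlinarith

lemma exists_Kc_inter_ne {ι : Type*} [Finite ι] (X Y : ι → Set (V k)) (hXY : ∀ i, X i ≠ Y i) :
    ∃ c : ℕ, ∀ i, X i ∩ Kc k c ≠ Y i ∩ Kc k c := by
  choose x hx using fun i => not_forall.mp (mt Set.ext (hXY i))
  obtain ⟨c, hc⟩ := exists_subset_Kc_of_finite (Set.finite_range x)
  refine ⟨c, fun i hi => hx i ?_⟩
  simpa [hc ⟨i, rfl⟩] using Set.ext_iff.mp hi (x i)

end Cube

/-- For `A ⊆ {t | 0 ≺ t}`: `A` meets fewer than `M` cosets of the subgroup `𝓛(A)`. -/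
def CosetBounded (prec : V k → V k → Prop) (A : Set (V k)) (M : ℕ) : Prop :=
  ∀ w : Fin M → V k, (∀ m, w m ∈ A) → ∃ m m', m ≠ m' ∧ w m - w m' ∈ Lset prec A

section CosetBounded

variable {A : Set (V k)} {M : ℕ} {x z g : V k}

lemma exists_nsmul_mem_Gset_of_forall_add_nsmul_mem (h : IsTransOrder prec)
    (hA : ∀ a ∈ A, prec 0 a) (hM : CosetBounded prec A M) (hg : prec 0 g)
    (hx : ∀ n : ℕ, x + n • g ∈ A) : ∃ m ≠ 0, m • g ∈ Gset prec A := by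
  have key : ∀ a b : ℕ, b < a → x + a • g - (x + b • g) ∈ Lset prec A →
      ∃ m ≠ 0, m • g ∈ Gset prec A := fun a b hba hL => by
    rw [add_sub_add_left_eq_sub, sub_eq_add_neg, ← sub_nsmul g hba.le] at hL
    exact ⟨a - b, by omega, mem_Gset_of_mem_Lset h hA hL (h.pos_nsmul hg (by omega))⟩
  obtain ⟨m, m', hne, hL⟩ := hM (fun m => x + (m : ℕ) • g) fun m => hx m
  rcases lt_or_gt_of_ne (Fin.val_ne_of_ne hne) with hlt | hgt
  · refine key m' m hlt ?_
    rw [← neg_sub]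
    exact (lsetAddSubgroup h A hA).neg_mem hL
  · exact key m m' hgt hL

lemma exists_nsmul_mem_Gset_of_mem_Gset_shiftPos (h : IsTransOrder prec)
    (hA : ∀ a ∈ A, prec 0 a) (hM : CosetBounded prec A M) (hz : z ∈ A)
    (hg : g ∈ Gset prec (shiftPos prec A z)) : ∃ m ≠ 0, m • g ∈ Gset prec A := by
  rcases eq_zero_or_pos_of_mem_Gset (fun _ => pos_of_mem_shiftPos) hg with rfl | hpos
  · exact ⟨1, one_ne_zero, by simpa using zero_mem_Gset hA⟩
  · exact exists_nsmul_mem_Gset_of_forall_add_nsmul_mem h hA hM hpos (add_nsmul_mem h hz hg)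

lemma sub_mem_of_mem_Gset_shiftPos (h : IsTransOrder prec) (hA : ∀ a ∈ A, prec 0 a)
    (hM : CosetBounded prec A M) (hz : z ∈ A) (hg : g ∈ Gset prec (shiftPos prec A z))
    (hpos : prec 0 (z - g)) : z - g ∈ A := by
  obtain ⟨m, hm, hmg⟩ := exists_nsmul_mem_Gset_of_mem_Gset_shiftPos h hA hM hz hg
  obtain ⟨n, rfl⟩ := Nat.exists_eq_succ_of_ne_zero hm
  have hzg : z + n • g - (n + 1) • g = z - g := by rw [succ_nsmul]; abel
  rw [← hzg] at hpos ⊢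
  exact sub_mem_of_mem_Gset hmg (add_nsmul_mem h hz hg n) hpos

lemma shiftPos_eq_of_add_mem_Gset_shiftPos (h : IsTransOrder prec) (hA : ∀ a ∈ A, prec 0 a)
    (hM : CosetBounded prec A M) (hx : x ∈ A) (hz : z ∈ A)
    (hg : g ∈ Gset prec (shiftPos prec A z)) (hxz : x + g = z) :
    shiftPos prec A x = shiftPos prec A z := by
  have hE : ∀ a ∈ shiftPos prec A z, prec 0 a := fun _ => pos_of_mem_shiftPos
  obtain ⟨m, hm, hmg⟩ := exists_nsmul_mem_Gset_of_mem_Gset_shiftPos h hA hM hz hg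
  obtain ⟨n, rfl⟩ := Nat.exists_eq_succ_of_ne_zero hm
  have hng := nsmul_mem_Gset h hE hg n
  calc shiftPos prec A x = shiftPos prec (shiftPos prec A ((n + 1) • g)) x := by rw [hmg.2]
    _ = shiftPos prec A (z + n • g) := by
      rw [shiftPos_shiftPos h (Or.inr (hA x hx)), ← hxz, succ_nsmul']
      abel_nf
    _ = shiftPos prec A z := shiftPos_add_of_mem_Gset_shiftPos h hng

lemma posPart_tr_Lset_shiftPos (h : IsTransOrder prec) (hA : ∀ a ∈ A, prec 0 a)
    (hM : CosetBounded prec A M) (hz : z ∈ A) :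
    posPart prec (tr (Lset prec (shiftPos prec A z)) z) =
      {y ∈ A | shiftPos prec A y = shiftPos prec A z} := by
  ext y
  simp only [mem_posPart, mem_tr, Set.mem_ofPred_eq]
  refine ⟨fun ⟨hy, hpos⟩ => ?_, fun ⟨hyA, hy⟩ =>
    ⟨sub_mem_Lset_shiftPos_of_shiftPos_eq h hyA hz hy, hA y hyA⟩⟩
  rcases hy with hy | hy
  · simpa using And.intro (add_nsmul_mem h hz hy 1) (shiftPos_add_of_mem_Gset_shiftPos h hy)
  · rw [Set.mem_neg, neg_sub] at hy
    have hyA : y ∈ A := by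
      simpa using sub_mem_of_mem_Gset_shiftPos h hA hM hz hy (by simpa using hpos)
    exact ⟨hyA, shiftPos_eq_of_add_mem_Gset_shiftPos h hA hM hyA hz hy (by abel)⟩

lemma latticeRank_coe (H : AddSubgroup (V k)) :
    latticeRank (H : Set (V k)) = Module.finrank ℤ (AddSubgroup.toIntSubmodule H) := by
  rw [latticeRank, AddSubgroup.closure_eq]

lemma exists_zsmul_mem_Lset_of_mem_Lset_shiftPos (h : IsTransOrder prec)
    (hA : ∀ a ∈ A, prec 0 a) (hM : CosetBounded prec A M) (hz : z ∈ A)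
    (hx : x ∈ Lset prec (shiftPos prec A z)) : ∃ m : ℤ, m ≠ 0 ∧ m • x ∈ Lset prec A := by
  rcases hx with hx | hx
  · obtain ⟨m, hm, hmx⟩ := exists_nsmul_mem_Gset_of_mem_Gset_shiftPos h hA hM hz hx
    exact ⟨m, by exact_mod_cast hm, Or.inl (by rwa [natCast_zsmul])⟩
  · obtain ⟨m, hm, hmx⟩ := exists_nsmul_mem_Gset_of_mem_Gset_shiftPos h hA hM hz hx
    exact ⟨-m, by simpa using hm, Or.inl (by rwa [neg_smul, ← smul_neg, natCast_zsmul])⟩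

lemma latticeRank_Lset_shiftPos (h : IsTransOrder prec) (hA : ∀ a ∈ A, prec 0 a)
    (hM : CosetBounded prec A M) (hz : z ∈ A) :
    latticeRank (Lset prec (shiftPos prec A z)) = latticeRank (Lset prec A) := by
  have hE : ∀ a ∈ shiftPos prec A z, prec 0 a := fun _ => pos_of_mem_shiftPos
  rw [← coe_lsetAddSubgroup h hA, ← coe_lsetAddSubgroup h hE, latticeRank_coe, latticeRank_coe]
  exact Submodule.finrank_eq_of_le_of_exists_smul_mem (Lset_subset_Lset_shiftPos h hA hz)
    fun x hx => exists_zsmul_mem_Lset_of_mem_Lset_shiftPos h hA hM hz hx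

lemma finite_of_Lset_eq_zero (hM : CosetBounded prec A M) (hL : Lset prec A = {0}) :
    A.Finite := by
  by_contra hinf
  let e := Set.Infinite.natEmbedding A hinf
  obtain ⟨m, m', hne, hmem⟩ := hM (fun m => e m) fun m => (e m).2
  rw [hL, Set.mem_singleton_iff, sub_eq_zero] at hmem
  exact hne (Fin.ext (e.injective (Subtype.ext hmem)))

lemma bounded_iff_Lset_eq_zero (h : IsTransOrder prec) (hA : ∀ a ∈ A, prec 0 a)
    (hM : CosetBounded prec A M) : (∃ c : ℕ, A ⊆ Kc k c) ↔ Lset prec A = {0} := by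
  refine ⟨fun ⟨c, hc⟩ => (Lset_eq_zero_iff hA).mpr fun g hg => ?_,
    fun hL => exists_subset_Kc_of_finite (finite_of_Lset_eq_zero hM hL)⟩
  by_contra hg0
  have hpos : prec 0 ((c + 1) • g) := h.pos_nsmul (hA g (mem_of_mem_Gset hg hg0)) c.succ_ne_zero
  have hmem := mem_of_mem_Gset (nsmul_mem_Gset h hA hg (c + 1)) (h.ne_zero_of_pos hpos)
  exact succ_nsmul_notMem_Kc hg0 c (hc hmem)

lemma Lset_shiftPos_eq_zero (h : IsTransOrder prec) (hA : ∀ a ∈ A, prec 0 a)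
    (hM : CosetBounded prec A M) (hz : z ∈ A) (hL : Lset prec A = {0}) :
    Lset prec (shiftPos prec A z) = {0} := by
  refine (Lset_eq_zero_iff fun _ => pos_of_mem_shiftPos).mpr fun g hg => ?_
  obtain ⟨m, hm, hmg⟩ := exists_nsmul_mem_Gset_of_mem_Gset_shiftPos h hA hM hz hg
  exact (smul_eq_zero.mp ((Lset_eq_zero_iff hA).mp hL _ hmg)).resolve_left hm

end CosetBounded

section Partition

variable {A : Set (V k)} {M : ℕ}

lemma disjoint_posPart_Lset_posPart_tr {z : V k} (h : IsTransOrder prec)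
    (hA : ∀ a ∈ A, prec 0 a) (hM : CosetBounded prec A M) (hz : z ∈ A \ Gset prec A) :
    Disjoint (posPart prec (Lset prec A))
      (posPart prec (tr (Lset prec (shiftPos prec A z)) z)) := by
  rw [posPart_Lset h hA, posPart_tr_Lset_shiftPos h hA hM hz.1, Set.disjoint_left]
  rintro y ⟨-, hy⟩ ⟨-, hyz⟩
  exact hz.2 ⟨Or.inr hz.1, by rw [← hyz, hy]⟩

lemma disjoint_posPart_tr_posPart_tr {z z' : V k} (h : IsTransOrder prec)
    (hA : ∀ a ∈ A, prec 0 a) (hM : CosetBounded prec A M) (hz : z ∈ A) (hz' : z' ∈ A)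
    (hne : shiftPos prec A z ≠ shiftPos prec A z') :
    Disjoint (posPart prec (tr (Lset prec (shiftPos prec A z)) z))
      (posPart prec (tr (Lset prec (shiftPos prec A z')) z')) := by
  rw [posPart_tr_Lset_shiftPos h hA hM hz, posPart_tr_Lset_shiftPos h hA hM hz',
    Set.disjoint_left]
  rintro y ⟨-, hy⟩ ⟨-, hy'⟩
  exact hne (hy.symm.trans hy')

lemma eq_posPart_Lset_union_iUnion {ι : Type*} {z : ι → V k} (h : IsTransOrder prec)
    (hA : ∀ a ∈ A, prec 0 a) (hM : CosetBounded prec A M) (hz : ∀ i, z i ∈ A)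
    (hsurj : ∀ d ∈ A \ Gset prec A, ∃ i, shiftPos prec A d = shiftPos prec A (z i)) :
    A = posPart prec (Lset prec A) ∪
      ⋃ i, posPart prec (tr (Lset prec (shiftPos prec A (z i))) (z i)) := by
  simp_rw [posPart_Lset h hA, posPart_tr_Lset_shiftPos h hA hM (hz _)]
  ext d
  simp only [Set.mem_union, Set.mem_iUnion, Set.mem_ofPred_eq]
  refine ⟨fun hd => ?_, by rintro (⟨hd, -⟩ | ⟨i, hd, -⟩) <;> exact hd⟩
  by_cases hG : d ∈ Gset prec A
  · exact Or.inl ⟨hd, hG.2⟩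
  · obtain ⟨i, hi⟩ := hsurj d ⟨hd, hG⟩
    exact Or.inr ⟨i, hd, hi⟩

lemma eq_range_of_Lset_eq_zero {ι : Type*} {z : ι → V k} (h : IsTransOrder prec)
    (hA : ∀ a ∈ A, prec 0 a) (hM : CosetBounded prec A M) (hz : ∀ i, z i ∈ A)
    (hsurj : ∀ d ∈ A \ Gset prec A, ∃ i, shiftPos prec A d = shiftPos prec A (z i))
    (hL : Lset prec A = {0}) : A = Set.range z := by
  ext d
  refine ⟨fun hd => ?_, by rintro ⟨i, rfl⟩; exact hz i⟩
  have hG : d ∉ Gset prec A := fun hG =>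
    h.ne_zero_of_pos (hA d hd) ((Lset_eq_zero_iff hA).mp hL d hG)
  obtain ⟨i, hi⟩ := hsurj d ⟨hd, hG⟩
  have hdi : d ∈ posPart prec (tr (Lset prec (shiftPos prec A (z i))) (z i)) := by
    rw [posPart_tr_Lset_shiftPos h hA hM (hz i)]
    exact ⟨hd, hi⟩
  rw [Lset_shiftPos_eq_zero h hA hM (hz i) hL] at hdi
  exact ⟨i, (sub_eq_zero.mp (mem_tr.mp hdi.1)).symm⟩

end Partition

section Window

variable {D Λ : Set (V k)} {t d : V k} {c c' : ℕ}

lemma window_eq_iff (hD : ∀ a ∈ D, prec 0 a) :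
    window prec Λ t c = D ∩ Kc k c ↔ ∀ s, prec 0 s → s ∈ Kc k c → (s + t ∈ Λ ↔ s ∈ D) := by
  simp only [Set.ext_iff, mem_window, Set.mem_inter_iff]
  refine ⟨fun H s hs hsc => ?_, fun H s => ?_⟩
  · have := H s
    tauto
  · have := H s
    have := hD s
    tauto

lemma window_eq_of_le (hD : ∀ a ∈ D, prec 0 a) (hcc : c ≤ c')
    (hw : window prec Λ t c' = D ∩ Kc k c') : window prec Λ t c = D ∩ Kc k c := by
  rw [window_eq_iff hD] at hw ⊢
  exact fun s hs hsc => hw s hs (Kc_mono hcc hsc)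

lemma mem_and_shiftPos_inter_Kc_eq_of_window_eq (h : IsTransOrder prec)
    (hD : ∀ a ∈ D, prec 0 a) (hd : d ∈ Kc k c') (hd0 : prec 0 d) (hdt : d + t ∈ Λ)
    (ht : window prec Λ t (c + c') = D ∩ Kc k (c + c'))
    (hdt' : window prec Λ (d + t) c = D ∩ Kc k c) :
    d ∈ D ∧ shiftPos prec D d ∩ Kc k c = D ∩ Kc k c := by
  rw [window_eq_iff hD] at ht hdt'
  have key : ∀ u, prec 0 u → u ∈ Kc k c → (u + d ∈ D ↔ u ∈ D) := fun u hu huc => by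
    rw [← ht _ (h.pos_add hu hd0) (add_mem_Kc huc hd), ← hdt' u hu huc, add_assoc]
  refine ⟨(ht d hd0 (Kc_mono (Nat.le_add_left c' c) hd)).mp hdt, ?_⟩
  ext u
  simp only [Set.mem_inter_iff, mem_shiftPos]
  exact ⟨fun ⟨⟨hud, hu⟩, huc⟩ => ⟨(key u hu huc).mp hud, huc⟩,
    fun ⟨huD, huc⟩ => ⟨⟨(key u (hD u huD) huc).mpr huD, hD u huD⟩, huc⟩⟩

open scoped Finset in
lemma exists_mul_card_window_eq_le (h : IsTransOrder prec) (hD : ∀ a ∈ D, prec 0 a) {M : ℕ}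
    (w : Fin M → V k) (hw : ∀ m, w m ∈ D)
    (hsep : ∀ m m', m ≠ m' → w m - w m' ∉ Lset prec D) :
    ∃ P : ℕ, ∀ Λ : Finset (V k),
      M * #{t ∈ Λ | window prec (Λ : Set (V k)) t P = D ∩ Kc k P} ≤ #Λ := by
  have hw_inj : Function.Injective w := fun m m' hmm' => by
    by_contra hne
    exact hsep m m' hne (by rw [hmm', sub_self]; exact Or.inl (zero_mem_Gset hD))
  obtain ⟨c', hc'⟩ := exists_subset_Kc_of_finite (Set.finite_range w)
  obtain ⟨c, hc⟩ := exists_Kc_inter_ne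
    (ι := {p : Fin M × Fin M // w p.1 - w p.2 ∈ D})
    (fun p => shiftPos prec D (w p.1.1 - w p.1.2)) (fun _ => D) fun p he =>
      hsep p.1.1 p.1.2 (fun h12 => h.irrefl 0 (by simpa [h12] using hD _ p.2))
        (Or.inl ⟨Or.inr p.2, he⟩)
  refine ⟨c + (c' + c'), fun Λ => ?_⟩
  set T := {t ∈ Λ | window prec (Λ : Set (V k)) t (c + (c' + c')) = D ∩ Kc k (c + (c' + c'))}
  -- The translates `T + w m` are disjoint: at a coincidence `t + w m = t' + w m'` both windows
  -- look like `D`, so inside `K_c` the set `D` would be invariant under its shift by `w m - w m'`.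
  have hsep' : ∀ t ∈ T, ∀ t' ∈ T, ∀ m m', prec 0 (w m - w m') → t + w m ≠ t' + w m' := by
    intro t ht t' ht' m m' hpos heq
    have htt' : t' = (w m - w m') + t := by rw [eq_sub_of_add_eq heq.symm]; abel
    rw [Finset.mem_filter, htt'] at ht'
    obtain ⟨hdD, hdK⟩ := mem_and_shiftPos_inter_Kc_eq_of_window_eq h hD
      (sub_mem_Kc (hc' ⟨m, rfl⟩) (hc' ⟨m', rfl⟩)) hpos (by exact_mod_cast ht'.1)
      (Finset.mem_filter.mp ht).2 (window_eq_of_le hD (Nat.le_add_right c _) ht'.2)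
    exact hc ⟨(m, m'), hdD⟩ hdK
  calc M * #T = #(T ×ˢ (Finset.univ : Finset (Fin M))) := by simp [mul_comm]
    _ ≤ #Λ := by
      refine Finset.card_le_card_of_injOn (fun q => q.1 + w q.2) (fun q hq => ?_) ?_
      · obtain ⟨hq1, -⟩ := Finset.mem_product.mp hq
        have := ((window_eq_iff hD).mp (Finset.mem_filter.mp hq1).2 (w q.2) (hD _ (hw q.2))
          (Kc_mono (by omega) (hc' ⟨q.2, rfl⟩))).mpr (hw q.2)
        rw [add_comm] at this
        exact_mod_cast this
      · rintro ⟨t, m⟩ hq ⟨t', m'⟩ hq' heq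
        simp only [Finset.coe_product, Set.mem_prod, Finset.mem_coe] at hq hq' heq
        rcases h.trichotomy (w m - w m') with h0 | hpos | hneg
        · obtain rfl := hw_inj (sub_eq_zero.mp h0)
          rw [add_left_inj] at heq
          rw [heq]
        · exact absurd heq (hsep' t hq.1 t' hq'.1 m m' hpos)
        · rw [neg_sub] at hneg
          exact absurd heq.symm (hsep' t' hq'.1 t hq.1 m' m hneg)

end Window

namespace CondD

variable (C : CondD k) {j : ℕ}

lemma lamP_antitone (hj : (j : ℕ∞) < C.q) : Antitone (C.lamP j) := fun p p' hpp =>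
  le_of_tendsto_of_tendsto' (C.tendsto_lamP j p' hj) (C.tendsto_lamP j p hj) fun n =>
    div_le_div_of_nonneg_right (by
      exact_mod_cast Finset.card_le_card (Finset.monotone_filter_right _
        fun _ _ => window_eq_of_le (fun _ ha => C.D_subset j hj ha) hpp)) (Nat.cast_nonneg _)

lemma lam_le_lamP (hj : (j : ℕ∞) < C.q) (p : ℕ) : C.lam j ≤ C.lamP j p :=
  le_of_tendsto (C.tendsto_lam j hj)
    ((eventually_ge_atTop p).mono fun _ hp => C.lamP_antitone hj hp)

open scoped Finset in
lemma mul_lam_le_one (hj : (j : ℕ∞) < C.q) {M P : ℕ}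
    (hM : ∀ Λ : Finset (V k),
      M * #{t ∈ Λ | window C.prec (Λ : Set (V k)) t P = C.D j ∩ Kc k P} ≤ #Λ) :
    M * C.lam j ≤ 1 := by
  have hP : M * C.lamP j P ≤ 1 := by
    refine le_of_tendsto ((C.tendsto_lamP j P hj).const_mul (M : ℝ)) ?_
    filter_upwards [C.card_top.eventually_ge_atTop 1] with n hn
    rw [mul_div_assoc', div_le_one (by exact_mod_cast hn)]
    exact_mod_cast hM (C.Lam n)
  exact (mul_le_mul_of_nonneg_left (C.lam_le_lamP hj P) (Nat.cast_nonneg M)).trans hP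

theorem exists_cosetBounded (hj : (j : ℕ∞) < C.q) : ∃ M, CosetBounded C.prec (C.D j) M := by
  obtain ⟨M, hM⟩ := exists_nat_gt (1 / C.lam j)
  refine ⟨M, fun w hw => ?_⟩
  by_contra! hsep
  obtain ⟨P, hP⟩ := exists_mul_card_window_eq_le C.ord (fun _ ha => C.D_subset j hj ha) w hw hsep
  have := C.mul_lam_le_one hj hP
  rw [div_lt_iff₀ (C.lam_pos j hj)] at hM
  linarith

end CondD

theorem stmt2_general (k : ℕ) (C : CondD k) (j : ℕ) (hj : (j : ℕ∞) < C.q)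
    (b : ℕ) (Dl : Fin b → Set (V k)) (zl : Fin b → V k)
    (hzl : ∀ i, zl i ∈ C.D j \ Gset C.prec (C.D j))
    (hDl : ∀ i, Dl i = shiftPos C.prec (C.D j) (zl i))
    (hinj : Function.Injective Dl)
    (hsurj : ∀ z ∈ C.D j \ Gset C.prec (C.D j), ∃ i, shiftPos C.prec (C.D j) z = Dl i) :
    (∃ H : AddSubgroup (V k), (H : Set (V k)) = Lset C.prec (C.D j)) ∧
    (C.D j = posPart C.prec (Lset C.prec (C.D j)) ∪
        ⋃ i, posPart C.prec (tr (Lset C.prec (Dl i)) (zl i))) ∧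
    (∀ i, Disjoint (posPart C.prec (Lset C.prec (C.D j)))
        (posPart C.prec (tr (Lset C.prec (Dl i)) (zl i)))) ∧
    (Pairwise fun i i' => Disjoint (posPart C.prec (tr (Lset C.prec (Dl i)) (zl i)))
        (posPart C.prec (tr (Lset C.prec (Dl i')) (zl i')))) ∧
    (∀ i, Lset C.prec (C.D j) ⊆ Lset C.prec (Dl i)) ∧
    (∀ i, latticeRank (Lset C.prec (Dl i)) = latticeRank (Lset C.prec (C.D j))) ∧
    ((∃ c : ℕ, C.D j ⊆ Kc k c) ↔ Lset C.prec (C.D j) = {0}) ∧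
    ((∃ c : ℕ, C.D j ⊆ Kc k c) → C.D j = Set.range zl) := by
  obtain rfl : Dl = fun i => shiftPos C.prec (C.D j) (zl i) := funext hDl
  have h := C.ord
  have hA : ∀ a ∈ C.D j, C.prec 0 a := fun _ ha => C.D_subset j hj ha
  have hzA : ∀ i, zl i ∈ C.D j := fun i => (hzl i).1
  obtain ⟨M, hM⟩ := C.exists_cosetBounded hj
  have hbdd := bounded_iff_Lset_eq_zero h hA hM
  exact ⟨⟨lsetAddSubgroup h _ hA, rfl⟩,
    eq_posPart_Lset_union_iUnion h hA hM hzA hsurj,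
    fun i => disjoint_posPart_Lset_posPart_tr h hA hM (hzl i),
    fun i i' hii' => disjoint_posPart_tr_posPart_tr h hA hM (hzA i) (hzA i') (hinj.ne hii'),
    fun i => Lset_subset_Lset_shiftPos h hA (hzA i),
    fun i => latticeRank_Lset_shiftPos h hA hM (hzA i), hbdd,
    fun hb => eq_range_of_Lset_eq_zero h hA hM hzA hsurj (hbdd.mp hb)⟩

/-- lattice structure and partition of `D_j`:
`𝓛_j` is a subgroup of `ℤ^k`; `D_j` is partitioned as
`𝓛_j⁺ ∪ ⋃_i ((𝓛_{l_i})_{z_{l_i}})⁺` (pairwise disjoint); `𝓛_{l_i} ⊇ 𝓛_j` with equal rank;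
and `D_j` is bounded iff `𝓛_j = {0}`, in which case `D_j = {z_{l_1},…,z_{l_{b_j}}}`. -/
theorem stmt2 (k : ℕ) (hk : 1 ≤ k) (C : CondD k) (j : ℕ) (hj : (j : ℕ∞) < C.q)
    (b : ℕ) (Dl : Fin b → Set (V k)) (zl : Fin b → V k)
    (hzl : ∀ i, zl i ∈ C.D j \ Gset C.prec (C.D j))
    (hDl : ∀ i, Dl i = shiftPos C.prec (C.D j) (zl i))
    (hinj : Function.Injective Dl)
    (hsurj : ∀ z ∈ C.D j \ Gset C.prec (C.D j), ∃ i, shiftPos C.prec (C.D j) z = Dl i) :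
    (∃ H : AddSubgroup (V k), (H : Set (V k)) = Lset C.prec (C.D j)) ∧
    (C.D j = posPart C.prec (Lset C.prec (C.D j)) ∪
        ⋃ i, posPart C.prec (tr (Lset C.prec (Dl i)) (zl i))) ∧
    (∀ i, Disjoint (posPart C.prec (Lset C.prec (C.D j)))
        (posPart C.prec (tr (Lset C.prec (Dl i)) (zl i)))) ∧
    (Pairwise fun i i' => Disjoint (posPart C.prec (tr (Lset C.prec (Dl i)) (zl i)))
        (posPart C.prec (tr (Lset C.prec (Dl i')) (zl i')))) ∧
    (∀ i, Lset C.prec (C.D j) ⊆ Lset C.prec (Dl i)) ∧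
    (∀ i, latticeRank (Lset C.prec (Dl i)) = latticeRank (Lset C.prec (C.D j))) ∧
    ((∃ c : ℕ, C.D j ⊆ Kc k c) ↔ Lset C.prec (C.D j) = {0}) ∧
    ((∃ c : ℕ, C.D j ⊆ Kc k c) → C.D j = Set.range zl) :=
  stmt2_general k C j hj b Dl zl hzl hDl hinj hsurj

end Paper
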